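/- Suppose (ρ, E) solves the reduced Euler–Poisson system with entropy constant κ0 on [0, τ] ⊂ [0, r0) with E(0) = E0 and M(t) > 1 on [0, τ]. Set μ1 := (m0²/(γ·κ0))^{1/(γ+1)} and α1 := b0·r0²/2 + ((γ+1)/(2γ))·μ1·r0^{2γ/(γ+1)}. Then for all t ∈ [0, τ], (r0·E0 − α1)/(r0 − t) ≤ E(t) ≤ (r0·E0 + α1)/(r0 − t). -/

import Mathlib

open Real Set

/-- The right-hand side `g1(t, ρ, E, κ)` of the density equation of the reduced
radial Euler–Poisson system (with `t̂ = r0 − t` and mass flux `m0`). -/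
noncomputable def g1 (γ r0 m0 κ t ρv Ev : ℝ) : ℝ :=
  ρv * ((r0 - t) * Ev - m0 ^ 2 / ((r0 - t) ^ 2 * ρv ^ 2)) /
    ((r0 - t) * (γ * κ * ρv ^ (γ - 1) - m0 ^ 2 / ((r0 - t) ^ 2 * ρv ^ 2)))

/-- The right-hand side `g2(t, ρ, E) = t̂·(ρ − b(t))` of the electric-field equation. -/
noncomputable def g2 (r0 t ρv bv : ℝ) : ℝ := (r0 - t) * (ρv - bv)

/-- `(ρ, E)` is a (C¹) solution of the reduced radial Euler–Poisson system with
entropy constant `κ` on the set `I`: `ρ > 0`, `ρ' = g1(t, ρ, E, κ)` and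
`(t̂·E)' = g2(t, ρ, E)` on `I`. -/
def EPsol (γ r0 m0 κ : ℝ) (b ρ E : ℝ → ℝ) (I : Set ℝ) : Prop :=
  (∀ t ∈ I, 0 < ρ t) ∧
  (∀ t ∈ I, HasDerivAt ρ (g1 γ r0 m0 κ t (ρ t) (E t)) t) ∧
  (∀ t ∈ I, HasDerivAt (fun s => (r0 - s) * E s) (g2 r0 t (ρ t) (b t)) t)

/-- The associated velocity `u = m0/(t̂·ρ)`. -/
noncomputable def uA (r0 m0 : ℝ) (ρ : ℝ → ℝ) (t : ℝ) : ℝ := m0 / ((r0 - t) * ρ t)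

/-- The associated pressure `p = κ·ρ^γ`. -/
noncomputable def pA (γ κ : ℝ) (ρ : ℝ → ℝ) (t : ℝ) : ℝ := κ * ρ t ^ γ

/-- The associated squared Mach number `M² = ρ·u²/(γ·p)`. -/
noncomputable def MsqA (γ r0 m0 κ : ℝ) (ρ : ℝ → ℝ) (t : ℝ) : ℝ :=
  ρ t * uA r0 m0 ρ t ^ 2 / (γ * pA γ κ ρ t)

/-- The associated Bernoulli function `B = u²/2 + γ·p/((γ−1)·ρ)`. -/
noncomputable def BA (γ r0 m0 κ : ℝ) (ρ : ℝ → ℝ) (t : ℝ) : ℝ :=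
  uA r0 m0 ρ t ^ 2 / 2 + γ * pA γ κ ρ t / ((γ - 1) * ρ t)

/-!
Write `F = t̂·E`, so that `F' = t̂·(ρ − b)`. Since `ρ > 0` and `b ≤ b0`, `F' ≥ −b0·t̂`, which
integrates to the lower bound. For the upper bound, `b ≥ 0` gives `F' ≤ t̂·ρ`, and supersonicity
`M² > 1` says exactly `ρ^{γ+1} < μ1^{γ+1}/t̂²`, i.e. `t̂·ρ < μ1·t̂^{β−1}` with `β = 2γ/(γ+1)`;
integrating gives `F(t) − F(0) ≤ μ1·(r0^β − t̂^β)/β ≤ μ1·r0^β/β`.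
-/

theorem sub_le_sub_of_hasDerivAt_le {f g f' g' : ℝ → ℝ} {a b x : ℝ}
    (hf : ∀ y ∈ Icc a b, HasDerivAt f (f' y) y) (hg : ∀ y ∈ Icc a b, HasDerivAt g (g' y) y)
    (hfg : ∀ y ∈ Icc a b, f' y ≤ g' y) (hx : x ∈ Icc a b) : f x - f a ≤ g x - g a := by
  have hmono : MonotoneOn (g - f) (Icc a b) :=
    monotoneOn_of_hasDerivWithinAt_nonneg (convex_Icc a b)
      (fun y hy => ((hg y hy).sub (hf y hy)).continuousAt.continuousWithinAt)
      (fun y hy => ((hg y (interior_subset hy)).sub (hf y (interior_subset hy))).hasDerivWithinAt)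
      (fun y hy => sub_nonneg.2 (hfg y (interior_subset hy)))
  have := hmono (left_mem_Icc.2 (hx.1.trans hx.2)) hx hx.1
  simp only [Pi.sub_apply] at this
  linarith

theorem hasDerivAt_rpow_sub_div {r p t : ℝ} (hp : p ≠ 0) (ht : t < r) :
    HasDerivAt (fun s => (r - s) ^ p / p) (-(r - t) ^ (p - 1)) t := by
  have hsub : HasDerivAt (fun s : ℝ => r - s) (-1) t := by
    simpa using (hasDerivAt_id t).const_sub r
  refine (((Real.hasDerivAt_rpow_const (p := p) (Or.inl (sub_pos.2 ht).ne')).comp t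
    hsub).div_const p).congr_deriv ?_
  field_simp

theorem MsqA_eq {γ r0 m0 κ t : ℝ} {ρ : ℝ → ℝ} (hs : 0 < r0 - t) (hρ : 0 < ρ t) :
    MsqA γ r0 m0 κ ρ t = m0 ^ 2 / (γ * κ) / ((r0 - t) ^ 2 * ρ t ^ (γ + 1)) := by
  unfold MsqA uA pA
  rw [Real.rpow_add_one hρ.ne']
  field_simp

theorem mul_lt_of_one_lt_MsqA {γ r0 m0 κ t : ℝ} {ρ : ℝ → ℝ} (hγ : 0 < γ) (hs : 0 < r0 - t)
    (hρ : 0 < ρ t) (hM : 1 < MsqA γ r0 m0 κ ρ t) :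
    (r0 - t) * ρ t <
      (m0 ^ 2 / (γ * κ)) ^ (1 / (γ + 1)) * (r0 - t) ^ (2 * γ / (γ + 1) - 1) := by
  rw [MsqA_eq hs hρ] at hM
  have hden : 0 < (r0 - t) ^ 2 * ρ t ^ (γ + 1) := by positivity
  have hA : 0 < m0 ^ 2 / (γ * κ) := hden.trans ((one_lt_div hden).1 hM)
  have hroot : ρ t < (m0 ^ 2 / (γ * κ)) ^ (1 / (γ + 1)) / (r0 - t) ^ (2 / (γ + 1)) := by
    have hpow : ρ t ^ (γ + 1) < m0 ^ 2 / (γ * κ) / (r0 - t) ^ 2 := by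
      rw [lt_div_iff₀ (by positivity)]
      rw [one_lt_div hden] at hM
      linarith
    rw [← lt_rpow_inv_iff_of_pos hρ.le (by positivity) (by linarith),
      ← Real.rpow_natCast (r0 - t) 2, Real.div_rpow hA.le (by positivity),
      ← Real.rpow_mul hs.le] at hpow
    simpa [one_div, div_eq_mul_inv] using hpow
  have hexp : 2 * γ / (γ + 1) - 1 = 1 - 2 / (γ + 1) := by field_simp; ring
  calc (r0 - t) * ρ t
      < (r0 - t) * ((m0 ^ 2 / (γ * κ)) ^ (1 / (γ + 1)) / (r0 - t) ^ (2 / (γ + 1))) :=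
        mul_lt_mul_of_pos_left hroot hs
    _ = _ := by rw [hexp, Real.rpow_sub hs, Real.rpow_one]; ring

namespace EPsol

variable {γ r0 m0 κ τ : ℝ} {b ρ E : ℝ → ℝ}

theorem le_field_sub (hsol : EPsol γ r0 m0 κ b ρ E (Icc 0 τ)) (hτr : τ < r0) {b0 : ℝ}
    (hb : ∀ t ∈ Icc 0 τ, b t ≤ b0) {t : ℝ} (ht : t ∈ Icc 0 τ) :
    b0 * ((r0 - t) ^ 2 - r0 ^ 2) / 2 ≤ (r0 - t) * E t - r0 * E 0 := by
  have hlow : ∀ s ∈ Icc 0 τ, HasDerivAt (fun s => b0 * (r0 - s) ^ 2 / 2) (-b0 * (r0 - s)) s :=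
    fun s _ => ((((hasDerivAt_id s).const_sub r0).pow 2).const_mul b0).div_const 2
      |>.congr_deriv (by simp; ring)
  have hderiv : ∀ s ∈ Icc 0 τ, -b0 * (r0 - s) ≤ g2 r0 s (ρ s) (b s) := fun s hs => by
    have : 0 ≤ (r0 - s) * (ρ s - b s + b0) :=
      mul_nonneg (by linarith [hs.2]) (by linarith [hsol.1 s hs, hb s hs])
    unfold g2
    linarith
  have := sub_le_sub_of_hasDerivAt_le hlow hsol.2.2 hderiv ht
  simp only [sub_zero] at this
  linarith

theorem field_sub_le (hsol : EPsol γ r0 m0 κ b ρ E (Icc 0 τ)) (hτr : τ < r0)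
    (hb : ∀ t ∈ Icc 0 τ, 0 ≤ b t) {μ β : ℝ} (hβ : β ≠ 0)
    (hρ : ∀ t ∈ Icc 0 τ, (r0 - t) * ρ t ≤ μ * (r0 - t) ^ (β - 1)) {t : ℝ} (ht : t ∈ Icc 0 τ) :
    (r0 - t) * E t - r0 * E 0 ≤ μ * (r0 ^ β - (r0 - t) ^ β) / β := by
  have hup : ∀ s ∈ Icc 0 τ,
      HasDerivAt (fun s => -μ * ((r0 - s) ^ β / β)) (μ * (r0 - s) ^ (β - 1)) s :=
    fun s hs => ((hasDerivAt_rpow_sub_div hβ (hs.2.trans_lt hτr)).const_mul (-μ)).congr_deriv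
      (by ring)
  have hderiv : ∀ s ∈ Icc 0 τ, g2 r0 s (ρ s) (b s) ≤ μ * (r0 - s) ^ (β - 1) := fun s hs => by
    have : 0 ≤ (r0 - s) * b s := mul_nonneg (by linarith [hs.2]) (hb s hs)
    unfold g2
    linarith [hρ s hs]
  have := sub_le_sub_of_hasDerivAt_le hsol.2.2 hup hderiv ht
  simp only [sub_zero] at this
  exact this.trans_eq (by ring)

end EPsol

theorem stmt6 (γ r0 b0 E0 τ : ℝ) (b : ℝ → ℝ)
    (hγ : 1 < γ)
    (hbpos : ∀ t ∈ Icc 0 r0, 0 < b t)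
    (hbbd : ∀ t ∈ Icc 0 r0, |b t| ≤ b0 ∧ |derivWithin b (Icc 0 r0) t| ≤ b0)
    (m0 κ0 : ℝ)
    (hτr : τ < r0)
    (ρ E : ℝ → ℝ) (hsol : EPsol γ r0 m0 κ0 b ρ E (Icc 0 τ))
    (hEinit : E 0 = E0)
    (hM : ∀ t ∈ Icc 0 τ, 1 < MsqA γ r0 m0 κ0 ρ t)
    (μ1 α1 : ℝ) (hμ1 : μ1 = (m0 ^ 2 / (γ * κ0)) ^ (1 / (γ + 1)))
    (hα1 : α1 = b0 * r0 ^ 2 / 2 + (γ + 1) / (2 * γ) * μ1 * r0 ^ (2 * γ / (γ + 1))) :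
    ∀ t ∈ Icc 0 τ,
      (r0 * E0 - α1) / (r0 - t) ≤ E t ∧ E t ≤ (r0 * E0 + α1) / (r0 - t) := by
  intro t ht
  subst hα1
  set β := 2 * γ / (γ + 1)
  have hs : 0 < r0 - t := by linarith [ht.2]
  have hr0 : 0 < r0 := by linarith [ht.1]
  have hβ : 0 < β := div_pos (by linarith) (by linarith)
  have hsub : Icc 0 τ ⊆ Icc 0 r0 := Icc_subset_Icc_right hτr.le
  have hbound : ∀ s ∈ Icc 0 τ, (r0 - s) * ρ s < μ1 * (r0 - s) ^ (β - 1) := fun s hs => by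
    rw [hμ1]
    exact mul_lt_of_one_lt_MsqA (by linarith) (by linarith [hs.2]) (hsol.1 s hs) (hM s hs)
  have hμ1_pos : 0 < μ1 := pos_of_mul_pos_left
    ((mul_pos hs (hsol.1 t ht)).trans (hbound t ht)) (Real.rpow_nonneg hs.le _)
  have hb0 : 0 ≤ b0 := (abs_nonneg _).trans (hbbd t (hsub ht)).1
  have hlow := hsol.le_field_sub hτr (fun s hs => (le_abs_self _).trans (hbbd s (hsub hs)).1) ht
  have hup := hsol.field_sub_le hτr (fun s hs => (hbpos s (hsub hs)).le) hβ.ne'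
    (fun s hs => (hbound s hs).le) ht
  have hα1 : (γ + 1) / (2 * γ) * μ1 * r0 ^ β = μ1 * r0 ^ β / β := by
    simp only [β]; field_simp
  rw [hEinit, mul_sub, sub_div] at hup
  rw [hEinit] at hlow
  constructor
  · rw [div_le_iff₀ hs]
    linarith [show 0 ≤ b0 * (r0 - t) ^ 2 by positivity, show 0 ≤ μ1 * r0 ^ β / β by positivity]
  · rw [le_div_iff₀ hs]
    linarith [show 0 ≤ b0 * r0 ^ 2 by positivity, show 0 ≤ μ1 * (r0 - t) ^ β / β by positivity]
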